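/- Let A be a Krull domain with group of divisorial fractional ideals Div(A) and essential valuations ν_p indexed by height-one primes p, let K be an abelian group and φ: K → Div(A) a group homomorphism. Define for each height-one prime p the map μ_p on nonzero homogeneous elements a·χ^w of the group algebra Q(A)[K] by μ_p(a χ^w) = ν_p(a) + ν_p(φ(w)). Then each μ_p is a discrete K-valuation on the K-simple ring Q(A)[K], and the intersection R = ∩_p S_{μ_p} of the associated valuation rings is a K-graded subring with homogeneous components R_w = {a ∈ Q(A) : a = 0 or div(a) + φ(w) ≥ 0}·χ^w; in particular R_0 = A. -/

import Mathlib

/-!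
Every `S_{μ_p}` lies in the subring of elements all of whose homogeneous components `a·χ^u`
satisfy `μ_p ≥ 0`: that set is a subring because `ν_p` is multiplicative and ultrametric, so each
coefficient `∑_{u₁+u₂=u} a_{u₁} b_{u₂}` of a product again has `ν_p ≥ -φ(u)_p`. Hence a homogeneous
element of `R` of degree `w` is `a·χ^w` with `ν_p(a) + φ(w)_p ≥ 0` for all `p`, and conversely such
an element is one of the generators of every `S_{μ_p}`. For `w = 0` the condition reads
`div(a) ≥ 0`, which characterises the elements of `A` inside `Q(A)`.
-/

section

variable {A : Type*} [CommRing A] [IsDomain A] {P : Type*}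
  (ν : P → FractionRing A → ℤ) {K : Type*} [AddCommGroup K] (Φ : K →+ (P →₀ ℤ))

/-- The homogeneous element `a·χ^w` of the group algebra `Q(A)[K]`. -/
noncomputable def MAsingle (w : K) (a : FractionRing A) : AddMonoidAlgebra (FractionRing A) K :=
  AddMonoidAlgebra.ofCoeff (Finsupp.single w a)

/-- The `K`-valuation subring `S_{μ_p}` of `Q(A)[K]` determined by the discrete `K`-valuation
`μ_p(a·χ^w) = ν_p(a) + ν_p(φ(w))` (here `ν_p(φ(w))` is encoded as `Φ w p`, using
`Div(A) ≅ ⊕_p ℤ`). -/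
noncomputable def valSubring (p : P) : Subring (AddMonoidAlgebra (FractionRing A) K) :=
  Subring.closure {x : AddMonoidAlgebra (FractionRing A) K |
    ∃ (w : K) (a : FractionRing A), a ≠ 0 ∧ 0 ≤ ν p a + Φ w p ∧ x = MAsingle w a}

section CoeffwiseIntegral

variable {R : Type*} [Ring R] {v : R → ℤ}

theorem map_one_eq_zero_of_map_mul [Nontrivial R]
    (hmul : ∀ a b : R, a ≠ 0 → b ≠ 0 → v (a * b) = v a + v b) : v 1 = 0 := by
  have h := hmul 1 1 one_ne_zero one_ne_zero
  rw [mul_one] at h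
  omega

theorem map_neg_eq_of_map_mul [Nontrivial R]
    (hmul : ∀ a b : R, a ≠ 0 → b ≠ 0 → v (a * b) = v a + v b) (a : R) : v (-a) = v a := by
  rcases eq_or_ne a 0 with rfl | ha
  · rw [neg_zero]
  have h_neg_one : v (-1) = 0 := by
    have h := hmul (-1) (-1) (neg_ne_zero.mpr one_ne_zero) (neg_ne_zero.mpr one_ne_zero)
    rw [neg_mul_neg, mul_one, map_one_eq_zero_of_map_mul hmul] at h
    omega
  rw [← neg_one_mul, hmul _ _ (neg_ne_zero.mpr one_ne_zero) ha, h_neg_one, zero_add]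

theorem eq_zero_or_add_le_map_mul
    (hmul : ∀ a b : R, a ≠ 0 → b ≠ 0 → v (a * b) = v a + v b) {m n : ℤ} {a b : R}
    (ha : a = 0 ∨ m ≤ v a) (hb : b = 0 ∨ n ≤ v b) : a * b = 0 ∨ m + n ≤ v (a * b) := by
  by_cases ha0 : a = 0
  · simp [ha0]
  by_cases hb0 : b = 0
  · simp [hb0]
  rw [hmul a b ha0 hb0]
  exact Or.inr (add_le_add (ha.resolve_left ha0) (hb.resolve_left hb0))

theorem eq_zero_or_le_map_add
    (hadd : ∀ a b : R, a ≠ 0 → b ≠ 0 → a + b ≠ 0 → min (v a) (v b) ≤ v (a + b)) {n : ℤ}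
    {a b : R} (ha : a = 0 ∨ n ≤ v a) (hb : b = 0 ∨ n ≤ v b) : a + b = 0 ∨ n ≤ v (a + b) := by
  by_cases ha0 : a = 0
  · rwa [ha0, zero_add]
  by_cases hb0 : b = 0
  · rwa [hb0, add_zero]
  by_cases hab : a + b = 0
  · exact Or.inl hab
  exact Or.inr ((le_min (ha.resolve_left ha0) (hb.resolve_left hb0)).trans (hadd a b ha0 hb0 hab))

theorem eq_zero_or_le_map_sum
    (hadd : ∀ a b : R, a ≠ 0 → b ≠ 0 → a + b ≠ 0 → min (v a) (v b) ≤ v (a + b)) {n : ℤ}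
    {ι : Type*} (s : Finset ι) (f : ι → R) (h : ∀ i ∈ s, f i = 0 ∨ n ≤ v (f i)) :
    ∑ i ∈ s, f i = 0 ∨ n ≤ v (∑ i ∈ s, f i) :=
  Finset.sum_induction f (fun a => a = 0 ∨ n ≤ v a)
    (fun _ _ => eq_zero_or_le_map_add hadd) (Or.inl rfl) h

variable [Nontrivial R] (v) (c : K →+ ℤ)

def coeffwiseIntegralSubring
    (hmul : ∀ a b : R, a ≠ 0 → b ≠ 0 → v (a * b) = v a + v b)
    (hadd : ∀ a b : R, a ≠ 0 → b ≠ 0 → a + b ≠ 0 → min (v a) (v b) ≤ v (a + b)) :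
    Subring (AddMonoidAlgebra R K) where
  carrier := {x | ∀ u, x.coeff u = 0 ∨ -c u ≤ v (x.coeff u)}
  zero_mem' _ := Or.inl rfl
  one_mem' u := by
    classical
    rw [AddMonoidAlgebra.one_def, AddMonoidAlgebra.coeff_single, Finsupp.single_apply]
    split_ifs with h
    · subst h
      simp [map_one_eq_zero_of_map_mul hmul]
    · exact Or.inl rfl
  add_mem' {x y} hx hy u := by
    rw [AddMonoidAlgebra.coeff_add, Finsupp.add_apply]
    exact eq_zero_or_le_map_add hadd (hx u) (hy u)
  neg_mem' {x} hx u := by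
    rw [AddMonoidAlgebra.coeff_neg, Finsupp.neg_apply, neg_eq_zero, map_neg_eq_of_map_mul hmul]
    exact hx u
  mul_mem' {x y} hx hy u := by
    classical
    rw [AddMonoidAlgebra.coeff_mul]
    refine eq_zero_or_le_map_sum hadd _ _ fun w₁ _ => ?_
    refine eq_zero_or_le_map_sum hadd _ _ fun w₂ _ => ?_
    dsimp only
    split_ifs with h
    · subst h
      rw [map_add, neg_add]
      exact eq_zero_or_add_le_map_mul hmul (hx w₁) (hy w₂)
    · exact Or.inl rfl

end CoeffwiseIntegral

theorem AddMonoidAlgebra.eq_single_coeff_of_coeff_eq_zero {R M : Type*} [Semiring R]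
    {x : AddMonoidAlgebra R M} {w : M} (h : ∀ u, u ≠ w → x.coeff u = 0) :
    x = single w (x.coeff w) := by
  classical
  ext u
  rw [coeff_single, Finsupp.single_apply]
  split_ifs with hwu
  · rw [hwu]
  · exact h u (Ne.symm hwu)

theorem valSubring_le_coeffwiseIntegralSubring (p : P)
    (hmul : ∀ a b : FractionRing A, a ≠ 0 → b ≠ 0 → ν p (a * b) = ν p a + ν p b)
    (hadd : ∀ a b : FractionRing A, a ≠ 0 → b ≠ 0 → a + b ≠ 0 →
      min (ν p a) (ν p b) ≤ ν p (a + b)) :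
    valSubring ν Φ p ≤
      coeffwiseIntegralSubring (ν p) ((Finsupp.applyAddHom p).comp Φ) hmul hadd := by
  classical
  refine Subring.closure_le.mpr ?_
  rintro _ ⟨w, a, -, ha, rfl⟩ u
  change Finsupp.single w a u = 0 ∨ -Φ u p ≤ ν p (Finsupp.single w a u)
  rw [Finsupp.single_apply]
  split_ifs with h
  · subst h
    exact Or.inr (by omega)
  · exact Or.inl rfl

theorem MAsingle_mem_valSubring {p : P} {w : K} {a : FractionRing A}
    (h : a = 0 ∨ 0 ≤ ν p a + Φ w p) : MAsingle w a ∈ valSubring ν Φ p := by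
  rcases eq_or_ne a 0 with rfl | ha
  · rw [MAsingle, AddMonoidAlgebra.ofCoeff_single, AddMonoidAlgebra.single_zero]
    exact zero_mem _
  · exact Subring.subset_closure ⟨w, a, ha, h.resolve_left ha, rfl⟩

theorem mem_iInf_valSubring_and_coeff_eq_zero_iff
    (hmul : ∀ (p : P) (a b : FractionRing A), a ≠ 0 → b ≠ 0 → ν p (a * b) = ν p a + ν p b)
    (hadd : ∀ (p : P) (a b : FractionRing A), a ≠ 0 → b ≠ 0 → a + b ≠ 0 →
      min (ν p a) (ν p b) ≤ ν p (a + b))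
    (w : K) (x : AddMonoidAlgebra (FractionRing A) K) :
    (x ∈ (⨅ p : P, valSubring ν Φ p) ∧ ∀ u : K, u ≠ w → x.coeff u = 0) ↔
      ∃ a : FractionRing A, (a = 0 ∨ ∀ p : P, 0 ≤ ν p a + Φ w p) ∧ x = MAsingle w a := by
  constructor
  · rintro ⟨hx, hsupp⟩
    refine ⟨x.coeff w, or_iff_not_imp_left.mpr fun hxw p => ?_,
      AddMonoidAlgebra.eq_single_coeff_of_coeff_eq_zero hsupp⟩
    have hx_int := valSubring_le_coeffwiseIntegralSubring ν Φ p (hmul p) (hadd p)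
      (Subring.mem_iInf.mp hx p) w
    have : -Φ w p ≤ ν p (x.coeff w) := hx_int.resolve_left hxw
    omega
  · rintro ⟨a, ha, rfl⟩
    exact ⟨Subring.mem_iInf.mpr fun p => MAsingle_mem_valSubring ν Φ (ha.imp_right (· p)),
      fun u hu => Finsupp.single_eq_of_ne hu⟩

theorem eq_zero_or_forall_nonneg_iff_mem_range
    (hA : ∀ a : FractionRing A, a ≠ 0 →
      ((∀ p : P, 0 ≤ ν p a) ↔ a ∈ Set.range (algebraMap A (FractionRing A))))
    (a : FractionRing A) :
    (a = 0 ∨ ∀ p : P, 0 ≤ ν p a) ↔ a ∈ Set.range (algebraMap A (FractionRing A)) := by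
  rcases eq_or_ne a 0 with rfl | ha
  · exact iff_of_true (Or.inl rfl) ⟨0, map_zero _⟩
  · rw [← hA a ha, or_iff_right ha]

theorem stmt_11
    (hmul : ∀ (p : P) (a b : FractionRing A), a ≠ 0 → b ≠ 0 → ν p (a * b) = ν p a + ν p b)
    (hadd : ∀ (p : P) (a b : FractionRing A), a ≠ 0 → b ≠ 0 → a + b ≠ 0 →
      min (ν p a) (ν p b) ≤ ν p (a + b))
    (hsurj : ∀ (p : P) (n : ℤ), ∃ a : FractionRing A, a ≠ 0 ∧ ν p a = n)
    (hA : ∀ a : FractionRing A, a ≠ 0 →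
      ((∀ p : P, 0 ≤ ν p a) ↔ a ∈ Set.range (algebraMap A (FractionRing A)))) :
    -- Q(A)[K] is K-simple
    (∀ (w : K) (a : FractionRing A), a ≠ 0 →
      ∃ y : AddMonoidAlgebra (FractionRing A) K, MAsingle w a * y = 1) ∧
    -- each μ_p is a discrete K-valuation: multiplicative ...
    (∀ (p : P) (w w' : K) (a a' : FractionRing A), a ≠ 0 → a' ≠ 0 →
      ν p (a * a') + Φ (w + w') p = (ν p a + Φ w p) + (ν p a' + Φ w' p)) ∧
    -- ... satisfies the valuation inequality on each homogeneous component ...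
    (∀ (p : P) (w : K) (a a' : FractionRing A), a ≠ 0 → a' ≠ 0 → a + a' ≠ 0 →
      min (ν p a + Φ w p) (ν p a' + Φ w p) ≤ ν p (a + a') + Φ w p) ∧
    -- ... and is surjective onto ℤ
    (∀ (p : P) (n : ℤ), ∃ (w : K) (a : FractionRing A), a ≠ 0 ∧ ν p a + Φ w p = n) ∧
    -- the homogeneous components of R = ⋂_p S_{μ_p}
    (∀ (w : K) (x : AddMonoidAlgebra (FractionRing A) K),
      (x ∈ (⨅ p : P, valSubring ν Φ p) ∧ ∀ u : K, u ≠ w → x.coeff u = 0) ↔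
        ∃ a : FractionRing A, (a = 0 ∨ ∀ p : P, 0 ≤ ν p a + Φ w p) ∧ x = MAsingle w a) ∧
    -- in particular R_0 = A
    (∀ x : AddMonoidAlgebra (FractionRing A) K,
      (x ∈ (⨅ p : P, valSubring ν Φ p) ∧ ∀ u : K, u ≠ 0 → x.coeff u = 0) ↔
        ∃ a : A, x = MAsingle 0 (algebraMap A (FractionRing A) a)) := by
  have homogeneous_iff := mem_iInf_valSubring_and_coeff_eq_zero_iff ν Φ hmul hadd
  refine ⟨fun w a ha => ⟨MAsingle (-w) a⁻¹, ?_⟩, fun p w w' a a' ha ha' => ?_,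
    fun p w a a' ha ha' hs => ?_, fun p n => ?_, homogeneous_iff, fun x => ?_⟩
  · rw [MAsingle, MAsingle, AddMonoidAlgebra.ofCoeff_single, AddMonoidAlgebra.ofCoeff_single,
      AddMonoidAlgebra.single_mul_single,
      mul_inv_cancel₀ ha, add_neg_cancel, AddMonoidAlgebra.one_def]
  · rw [hmul p a a' ha ha', map_add, Finsupp.add_apply]
    ring
  · have := hadd p a a' ha ha' hs
    omega
  · obtain ⟨a, ha, rfl⟩ := hsurj p n
    exact ⟨0, a, ha, by simp⟩
  · simp only [homogeneous_iff, map_zero, Finsupp.coe_zero, Pi.zero_apply, add_zero,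
      eq_zero_or_forall_nonneg_iff_mem_range ν hA]
    constructor
    · rintro ⟨_, ⟨b, rfl⟩, rfl⟩
      exact ⟨b, rfl⟩
    · rintro ⟨b, rfl⟩
      exact ⟨_, ⟨b, rfl⟩, rfl⟩

end
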